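/- For all 0 ≤ k ≤ n, the iterated q-derivative in x satisfies D_{q,x}^k P_{n,q}^{(α)}(x,y;u) = ([n]_q!/[n-k]_q!) P_{n-k,q}^{(α)}(x,y;u). -/
import Mathlib


open Finset

def qNum {K : Type*} [Field K] (q : K) (n : ℕ) : K := ∑ i ∈ Finset.range n, q ^ i

def qFact {K : Type*} [Field K] (q : K) : ℕ → K
  | 0 => 1
  | n + 1 => qFact q n * qNum q (n + 1)

def qBinom {K : Type*} [Field K] (q : K) (n k : ℕ) : K :=
  qFact q n / (qFact q k * qFact q (n - k))

/-- The q-derivative operator on functions K → K. -/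
def Dq {K : Type*} [Field K] (q : K) (f : K → K) : K → K :=
  fun x => (f x - f (q * x)) / ((1 - q) * x)

/-- The deformed bivariate q-Appell polynomial, as a polynomial function of x and y. -/
def Pb {K : Type*} [Field K] (q u : K) (a : ℕ → K) (n : ℕ) (x y : K) : K :=
  ∑ j ∈ Finset.range (n + 1), qBinom q n j *
    (∑ i ∈ Finset.range (j + 1), qBinom q j i * u ^ ((j - i).choose 2) * a i * y ^ (j - i)) *
      x ^ (n - j)

lemma qFact_ne_zero {K : Type*} [Field K] (q : K) (hq : ∀ n : ℕ, 0 < n → qNum q n ≠ 0)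
    (n : ℕ) : qFact q n ≠ 0 := by
  induction n with
  | zero => simp [qFact]
  | succ m ih => exact mul_ne_zero ih (hq (m+1) (Nat.succ_pos m))

lemma qFact_succ {K : Type*} [Field K] (q : K) (n : ℕ) :
    qFact q (n + 1) = qFact q n * qNum q (n + 1) := rfl

lemma one_sub_pow {K : Type*} [Field K] (q : K) (m : ℕ) :
    1 - q ^ m = (1 - q) * qNum q m := by
  simp only [qNum]
  linear_combination geom_sum_mul q m

lemma Dq_pow {K : Type*} [Field K] (q x : K) (hq1 : q ≠ 1) (hx : x ≠ 0) (m : ℕ) :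
    Dq q (fun t => t ^ m) x = qNum q m * x ^ (m - 1) := by
  cases m with
  | zero => simp [Dq, qNum]
  | succ m =>
    simp only [Dq, Nat.add_sub_cancel]
    have h1 : (1 : K) - q ≠ 0 := sub_ne_zero.mpr (Ne.symm hq1)
    rw [div_eq_iff (mul_ne_zero h1 hx)]
    linear_combination x ^ (m + 1) * one_sub_pow q (m + 1)

lemma qBinom_mul_qNum {K : Type*} [Field K] (q : K) (hq : ∀ n : ℕ, 0 < n → qNum q n ≠ 0)
    {m j : ℕ} (hj : j ≤ m) :
    qBinom q (m+1) j * qNum q (m+1-j) = qNum q (m+1) * qBinom q m j := by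
  have h1 : m + 1 - j = (m - j) + 1 := by omega
  rw [qBinom, qBinom, h1, qFact_succ, qFact_succ]
  have h2 := qFact_ne_zero q hq j
  have h3 := qFact_ne_zero q hq (m-j)
  have h4 := hq (m-j+1) (Nat.succ_pos _)
  field_simp

lemma Dq_Pb {K : Type*} [Field K] (q u x y : K) (hq : ∀ n : ℕ, 0 < n → qNum q n ≠ 0)
    (hq1 : q ≠ 1) (hx : x ≠ 0) (a : ℕ → K) (m : ℕ) :
    Dq q (fun t => Pb q u a (m+1) t y) x = qNum q (m+1) * Pb q u a m x y := by
  have key : ∀ e : ℕ, (x^e - (q*x)^e)/((1-q)*x) = qNum q e * x^(e-1) := by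
    intro e; simpa [Dq] using Dq_pow q x hq1 hx e
  simp only [Dq, Pb]
  rw [← Finset.sum_sub_distrib, Finset.sum_div, Finset.sum_range_succ]
  simp only [Nat.sub_self, pow_zero, mul_one, sub_self, zero_div, add_zero]
  rw [Finset.mul_sum]
  apply Finset.sum_congr rfl
  intro j hj
  have hjm : j ≤ m := Nat.lt_succ_iff.mp (Finset.mem_range.mp hj)
  set S := ∑ i ∈ Finset.range (j + 1), qBinom q j i * u ^ ((j - i).choose 2) * a i * y ^ (j - i)
    with hS
  rw [show qBinom q (m+1) j * S * x ^ (m+1-j) - qBinom q (m+1) j * S * (q*x) ^ (m+1-j)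
      = qBinom q (m+1) j * S * (x ^ (m+1-j) - (q*x) ^ (m+1-j)) by ring,
    mul_div_assoc, key]
  have he : m + 1 - j - 1 = m - j := by omega
  rw [he]
  linear_combination S * x ^ (m-j) * qBinom_mul_qNum q hq hjm

lemma Pb_iter_aux {K : Type*} [Field K] (q u y : K)
    (hq : ∀ n : ℕ, 0 < n → qNum q n ≠ 0) (hq0 : q ≠ 0) (hq1 : q ≠ 1)
    (a : ℕ → K) (n k : ℕ) (hk : k ≤ n) :
    ∀ x : K, x ≠ 0 → (Dq q)^[k] (fun t => Pb q u a n t y) x =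
      qFact q n / qFact q (n - k) * Pb q u a (n - k) x y := by
  induction k with
  | zero =>
    intro x hx
    simp only [Function.iterate_zero, id, Nat.sub_zero]
    rw [div_self (qFact_ne_zero q hq n), one_mul]
  | succ k ih =>
    intro x hx
    have hk' : k ≤ n := Nat.le_of_succ_le hk
    obtain ⟨m, hm⟩ : ∃ m, n - k = m + 1 := ⟨n - k - 1, by omega⟩
    have hm' : n - (k + 1) = m := by omega
    rw [Function.iterate_succ_apply']
    have hx' : q * x ≠ 0 := mul_ne_zero hq0 hx
    show ((Dq q)^[k] (fun t => Pb q u a n t y) x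
        - (Dq q)^[k] (fun t => Pb q u a n t y) (q * x)) / ((1 - q) * x) = _
    rw [ih hk' x hx, ih hk' (q * x) hx', hm, hm']
    have hD := Dq_Pb q u x y hq hq1 hx a m
    simp only [Dq] at hD
    set c := qFact q n / qFact q (m + 1) with hc
    rw [show c * Pb q u a (m+1) x y - c * Pb q u a (m+1) (q*x) y
        = c * (Pb q u a (m+1) x y - Pb q u a (m+1) (q*x) y) by ring,
      mul_div_assoc, hD, hc, qFact_succ]
    have h2 := qFact_ne_zero q hq m
    have h3 := hq (m+1) (Nat.succ_pos _)
    field_simp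

/-- D_{q,x}^k P_n(x,y;u) = ([n]_q!/[n-k]_q!) P_{n-k}(x,y;u) for 0 ≤ k ≤ n. -/
theorem deformed_bivariate_qAppell_iter_qderiv_x {K : Type*} [Field K] (q u x y : K)
    (hq : ∀ n : ℕ, 0 < n → qNum q n ≠ 0) (hq0 : q ≠ 0) (hq1 : q ≠ 1) (hx : x ≠ 0)
    (a : ℕ → K) (n k : ℕ) (hk : k ≤ n) :
    (Dq q)^[k] (fun t => Pb q u a n t y) x =
      qFact q n / qFact q (n - k) * Pb q u a (n - k) x y := by
  exact Pb_iter_aux q u y hq hq0 hq1 a n k hk x hx
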